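/- Let c_1,…,c_n be reals with c_1 = 0 and c_n = 1, and let d_1,…,d_n be reals with d_1 = d_n = 1 and d_i ≠ 0 for all i. Set A = F·D and Ã = T·(D·A·G)ᵀ·T. Then for every 1 ≤ i ≤ n, Σ_{j=1}^{n} Ã_{ij} = 1 − c_{n+1−i}; that is, the row sums of the c-reflected tableau Ã equal the reflected nodes c̃_i = 1 − c_{n+1−i}. -/

import Mathlib

/-!
Since `D G = 1`, the product `D A G = D F D G` collapses to `D F`, so `Ã` is `(D F)ᵀ` with rows
and columns reversed, and its row sums are the column sums of `D F`, i.e. the entries of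
`(1ᵀ D) F`. The column sums of `D` telescope to `∑ᵢ D_{ik} = d_k ∏_{m > k} (1 - d_m)`, which
is the last unit vector once `d_n = 1`. Hence the row sums are the entries of the last row of
`F`, namely `c_n - c_{n+1-i} = 1 - c_{n+1-i}`. The identity `D G = 1` is the same telescoping
along the rows of `D`.
-/

open Finset Matrix
/-- The matrix `D` with entries `d_{ij}`: `0` for `i < j`, `d_i` for `i = j`, and
`-d_j · (∏_{k=j+1}^{i-1} (1 - d_k)) · d_i` for `i > j`. -/
def Dmat (n : ℕ) (d : Fin n → ℝ) : Matrix (Fin n) (Fin n) ℝ :=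
  Matrix.of fun i j =>
    if i < j then 0
    else if i = j then d i
    else -(d j) * (∏ k ∈ Finset.Ioo j i, (1 - d k)) * d i

/-- The lower-triangular matrix `G` with `G_{ii} = 1/d_i`, `G_{ij} = 1` for `i > j`. -/
noncomputable def Gmat (n : ℕ) (d : Fin n → ℝ) : Matrix (Fin n) (Fin n) ℝ :=
  Matrix.of fun i j => if i = j then 1 / d i else if j < i then 1 else 0

/-- The matrix `F` with `F_{ij} = c_i - c_j` for `i > j` and `0` otherwise. -/
def Fmat (n : ℕ) (c : Fin n → ℝ) : Matrix (Fin n) (Fin n) ℝ :=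
  Matrix.of fun i j => if j < i then c i - c j else 0

/-- The antidiagonal permutation matrix `T`, `T_{ij} = 1` iff `i + j = n + 1` (1-based). -/
def Tmat (n : ℕ) : Matrix (Fin n) (Fin n) ℝ :=
  Matrix.of fun i j => if (i : ℕ) + (j : ℕ) + 1 = n then 1 else 0

theorem prod_one_sub_ordered' {ι R : Type*} [LinearOrder ι] [CommRing R] (s : Finset ι)
    (f : ι → R) :
    ∏ i ∈ s, (1 - f i) = 1 - ∑ i ∈ s, f i * ∏ j ∈ s with i < j, (1 - f j) :=
  prod_one_sub_ordered (ι := ιᵒᵈ) s f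

variable {n : ℕ}

theorem mul_Gmat_apply (d : Fin n → ℝ) (M : Matrix (Fin n) (Fin n) ℝ) (i j : Fin n) :
    (M * Gmat n d) i j = M i j / d j + ∑ k ∈ Ioi j, M i k := by
  have hbelow : ∑ k with ¬j ≤ k, M i k * Gmat n d k j = 0 := sum_eq_zero fun k hk => by
    have hkj : k < j := not_le.1 (mem_filter.1 hk).2
    simp [Gmat, hkj.ne, hkj.not_gt]
  have habove : ∀ k ∈ Ioi j, M i k * Gmat n d k j = M i k := fun k hk => by
    simp [Gmat, (mem_Ioi.1 hk).ne', mem_Ioi.1 hk]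
  rw [mul_apply, ← sum_filter_add_sum_filter_not univ (j ≤ ·), hbelow, add_zero,
    filter_le_eq_Ici, ← Ioi_insert, sum_insert notMem_Ioi_self, sum_congr rfl habove]
  simp [Gmat, div_eq_mul_inv]

section Dmat

variable {d : Fin n → ℝ} {i j : Fin n}

theorem Dmat_apply_of_lt (h : i < j) : Dmat n d i j = 0 := by
  simp [Dmat, h]

theorem Dmat_apply_self : Dmat n d i i = d i := by
  simp [Dmat]

theorem Dmat_apply_of_gt (h : j < i) :
    Dmat n d i j = -(d j) * (∏ k ∈ Ioo j i, (1 - d k)) * d i := by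
  simp [Dmat, h.not_gt, h.ne']

theorem sum_Ioc_Dmat_apply (h : j < i) :
    ∑ k ∈ Ioc j i, Dmat n d i k = d i * ∏ m ∈ Ioo j i, (1 - d m) := by
  have hfilter : ∀ k ∈ Ioo j i, {m ∈ Ioo j i | k < m} = Ioo k i := fun k hk => by
    ext m; simp only [mem_filter, mem_Ioo] at hk ⊢; grind
  rw [← Ioo_insert_right h, sum_insert right_notMem_Ioo, Dmat_apply_self,
    prod_one_sub_ordered', mul_sub, mul_one, mul_sum, sub_eq_add_neg, ← sum_neg_distrib]
  congr 1
  refine sum_congr rfl fun k hk => ?_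
  rw [Dmat_apply_of_gt (mem_Ioo.1 hk).2, hfilter k hk]
  ring

theorem sum_Ici_Dmat_apply (k : Fin n) :
    ∑ i ∈ Ici k, Dmat n d i k = d k * ∏ m ∈ Ioi k, (1 - d m) := by
  have hfilter : ∀ i ∈ Ioi k, {m ∈ Ioi k | m < i} = Ioo k i := fun i hi => by
    ext m; simp only [mem_filter, mem_Ioi, mem_Ioo] at hi ⊢
  rw [← Ioi_insert, sum_insert notMem_Ioi_self, Dmat_apply_self,
    prod_one_sub_ordered, mul_sub, mul_one, mul_sum, sub_eq_add_neg, ← sum_neg_distrib]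
  congr 1
  refine sum_congr rfl fun i hi => ?_
  rw [Dmat_apply_of_gt (mem_Ioi.1 hi), hfilter i hi]
  ring

theorem sum_Dmat_apply (k : Fin n) :
    ∑ i, Dmat n d i k = d k * ∏ m ∈ Ioi k, (1 - d m) := by
  rw [← sum_Ici_Dmat_apply]
  exact (sum_subset (subset_univ _) fun i _ hi => Dmat_apply_of_lt (by simpa using hi)).symm

theorem vecMul_Dmat_of_isTop {l : Fin n} (hl : IsTop l) (hdl : d l = 1) :
    (1 : Fin n → ℝ) ᵥ* Dmat n d = Pi.single l 1 := by
  ext k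
  simp only [vecMul, dotProduct, Pi.one_apply, one_mul]
  rw [sum_Dmat_apply]
  rcases (hl k).eq_or_lt with rfl | hk
  · simp [hdl, hl.isMax.finsetIoi_eq]
  · rw [prod_eq_zero (mem_Ioi.2 hk) (by rw [hdl, sub_self]), mul_zero,
      Pi.single_eq_of_ne hk.ne]

theorem Dmat_mul_Gmat (hd : ∀ i, d i ≠ 0) : Dmat n d * Gmat n d = 1 := by
  ext i j
  rw [mul_Gmat_apply]
  rcases lt_trichotomy i j with h | rfl | h
  · rw [Dmat_apply_of_lt h, one_apply_ne h.ne,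
      sum_eq_zero fun k hk => Dmat_apply_of_lt (h.trans (mem_Ioi.1 hk))]
    simp
  · rw [Dmat_apply_self, one_apply_eq, div_self (hd i),
      sum_eq_zero fun k hk => Dmat_apply_of_lt (mem_Ioi.1 hk), add_zero]
  · have htail : ∑ k ∈ Ioi j, Dmat n d i k = ∑ k ∈ Ioc j i, Dmat n d i k :=
      (sum_subset Ioc_subset_Ioi_self fun k hk hk' => Dmat_apply_of_lt <| by
        simp only [mem_Ioi, mem_Ioc, not_and, not_le] at hk hk'
        exact hk' hk).symm
    rw [htail, sum_Ioc_Dmat_apply h, Dmat_apply_of_gt h, one_apply_ne h.ne']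
    field_simp [hd j]
    ring

end Dmat

theorem Tmat_apply (i j : Fin n) : Tmat n i j = if i.rev = j then 1 else 0 := by
  simp only [Tmat, of_apply, Fin.ext_iff, Fin.val_rev]
  exact if_congr (by omega) rfl rfl

theorem Tmat_mul_mul_Tmat_apply (M : Matrix (Fin n) (Fin n) ℝ) (i j : Fin n) :
    (Tmat n * M * Tmat n) i j = M i.rev j.rev := by
  simp [mul_apply, Tmat_apply, Fin.rev_eq_iff]
  simp [← Fin.rev_eq_iff]

theorem Fmat_apply_of_le (c : Fin n → ℝ) {i j : Fin n} (h : j ≤ i) :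
    Fmat n c i j = c i - c j := by
  rcases h.eq_or_lt with rfl | h
  · simp [Fmat]
  · simp [Fmat, h]

theorem stmt_12 (n : ℕ) (hn : 2 ≤ n) (c d : Fin n → ℝ)
    (hcn : c ⟨n - 1, by omega⟩ = 1)
    (hdn : d ⟨n - 1, by omega⟩ = 1)
    (hd : ∀ i : Fin n, d i ≠ 0)
    (A Atil : Matrix (Fin n) (Fin n) ℝ)
    (hA : A = Fmat n c * Dmat n d)
    (hAtil : Atil = Tmat n * (Dmat n d * A * Gmat n d)ᵀ * Tmat n) :
    ∀ i : Fin n, ∑ j : Fin n, Atil i j = 1 - c i.rev := by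
  intro i
  set l : Fin n := ⟨n - 1, by omega⟩
  have hl : IsTop l := fun k => Fin.le_def.2 (by simp [l]; omega)
  have hDAG : Dmat n d * A * Gmat n d = Dmat n d * Fmat n c := by
    rw [hA, Matrix.mul_assoc, Matrix.mul_assoc, Dmat_mul_Gmat hd, Matrix.mul_one]
  calc ∑ j, Atil i j = ∑ j, (Dmat n d * Fmat n c) j i.rev := by
        simp only [hAtil, hDAG, Tmat_mul_mul_Tmat_apply, transpose_apply]
        exact Equiv.sum_comp Fin.revPerm (fun j => (Dmat n d * Fmat n c) j i.rev)
    _ = ((1 ᵥ* Dmat n d) ᵥ* Fmat n c) i.rev := by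
        rw [vecMul_vecMul]
        simp only [vecMul, dotProduct, Pi.one_apply, one_mul]
    _ = 1 - c i.rev := by
        rw [vecMul_Dmat_of_isTop hl hdn, single_one_vecMul, row_apply,
          Fmat_apply_of_le c (hl _), hcn]
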